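/- Let H be a Hermitian n×n complex matrix, J_1,…,J_M n×n complex matrices, λ_1,…,λ_M positive reals, and let S ⊆ ℂⁿ be a nonzero subspace with the property that for every unit vector ψ₀ ∈ S and every t ≥ 0, the time-evolved state ρ(t) = exp(t𝓛)(ψ₀ψ₀ᴴ) satisfies L_D[ρ(t)] = 0 and ρ(t) = φφᴴ for some unit vector φ ∈ S. Then: (i) H maps S into S; (ii) there exist complex numbers c_1,…,c_M such that J_l ψ = c_l ψ for every ψ ∈ S and every l; and (iii) Γ ψ = g ψ for every ψ ∈ S, where g = Σ_{l=1}^M λ_l |c_l|². In particular the eigenvalues c_l and g are common to all vectors of S. -/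

import Mathlib

/-!
Taking the expectation of `L_D[ψψᴴ] = 0` in the pure state `ψ` gives
`Σ_l λ_l ‖J_l ψ - ⟨ψ, J_l ψ⟩ ψ‖² = 0`, so every vector of `S` is an eigenvector of every `J_l`,
hence each `J_l` acts on `S` as a scalar `c_l`. Once `J_l ψ = c_l ψ`, one computes
`L_D[ψψᴴ] ψ = ½ (g ψ - Γ ψ)`, which gives (iii). Finally, `ρ(t) ψ ∈ S` for all `t ≥ 0` and `S` is
closed, so the derivative at `t = 0`, `𝓛[ψψᴴ] ψ = -i (H ψ - ⟨ψ, H ψ⟩ ψ)`, lies in `S`: this is (i).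
-/

open Matrix BigOperators

attribute [local instance] Matrix.linftyOpNormedAddCommGroup Matrix.linftyOpNormedRing
  Matrix.linftyOpNormedAlgebra

/-- The decoherence superoperator `L_D[ρ] = Σ_l λ_l (J_l ρ J_lᴴ − ½ J_lᴴ J_l ρ − ½ ρ J_lᴴ J_l)`. -/
noncomputable def LD {M n : ℕ} (J : Fin M → Matrix (Fin n) (Fin n) ℂ)
    (lam : Fin M → ℝ) (ρ : Matrix (Fin n) (Fin n) ℂ) : Matrix (Fin n) (Fin n) ℂ :=
  ∑ l, (lam l : ℂ) • (J l * ρ * (J l)ᴴ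
    - (1 / 2 : ℂ) • ((J l)ᴴ * J l * ρ) - (1 / 2 : ℂ) • (ρ * ((J l)ᴴ * J l)))

/-- The decoherence operator `Γ = Σ_l λ_l J_lᴴ J_l`. -/
noncomputable def Gam {M n : ℕ} (J : Fin M → Matrix (Fin n) (Fin n) ℂ)
    (lam : Fin M → ℝ) : Matrix (Fin n) (Fin n) ℂ :=
  ∑ l, (lam l : ℂ) • ((J l)ᴴ * J l)

/-- The Liouvillian `𝓛[ρ] = −i[H,ρ] + L_D[ρ]` as a continuous linear endomorphism of the
space of `n×n` complex matrices (equipped with the `L∞`-operator norm). -/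
noncomputable def Liou {M n : ℕ} (H : Matrix (Fin n) (Fin n) ℂ)
    (J : Fin M → Matrix (Fin n) (Fin n) ℂ) (lam : Fin M → ℝ) :
    Matrix (Fin n) (Fin n) ℂ →L[ℂ] Matrix (Fin n) (Fin n) ℂ :=
  LinearMap.toContinuousLinearMap
    ((-Complex.I) • (LinearMap.mulLeft ℂ H - LinearMap.mulRight ℂ H)
      + ∑ l, (lam l : ℂ) •
          ((LinearMap.mulRight ℂ (J l)ᴴ).comp (LinearMap.mulLeft ℂ (J l))
            - (1 / 2 : ℂ) • LinearMap.mulLeft ℂ ((J l)ᴴ * J l)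
            - (1 / 2 : ℂ) • LinearMap.mulRight ℂ ((J l)ᴴ * J l)))

/-- The Liouvillian indeed sends `ρ` to `−i[H,ρ] + L_D[ρ]`. -/
theorem Liou_apply {M n : ℕ} (H : Matrix (Fin n) (Fin n) ℂ)
    (J : Fin M → Matrix (Fin n) (Fin n) ℂ) (lam : Fin M → ℝ)
    (ρ : Matrix (Fin n) (Fin n) ℂ) :
    Liou H J lam ρ = (-Complex.I) • (H * ρ - ρ * H) + LD J lam ρ := by
  simp [Liou, LD, LinearMap.mulLeft, LinearMap.mulRight]

/-- `exp(t𝓛)`, the exponential of the Liouvillian as a linear map. -/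
noncomputable def expL {M n : ℕ} (H : Matrix (Fin n) (Fin n) ℂ)
    (J : Fin M → Matrix (Fin n) (Fin n) ℂ) (lam : Fin M → ℝ) (t : ℝ) :
    Matrix (Fin n) (Fin n) ℂ →L[ℂ] Matrix (Fin n) (Fin n) ℂ :=
  haveI : IsTopologicalRing (Matrix (Fin n) (Fin n) ℂ →L[ℂ] Matrix (Fin n) (Fin n) ℂ) :=
    @NonUnitalSeminormedRing.toIsTopologicalRing _
      (@ContinuousLinearMap.toNormedRing ℂ (Matrix (Fin n) (Fin n) ℂ) _ _ _).toNonUnitalNormedRing.toNonUnitalSeminormedRing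
  NormedSpace.exp ((t : ℂ) • Liou H J lam)

/-- The matrix exponential `exp(−itH)`. -/
noncomputable def expM {n : ℕ} (H : Matrix (Fin n) (Fin n) ℂ) (t : ℝ) :
    Matrix (Fin n) (Fin n) ℂ :=
  NormedSpace.exp ((-(Complex.I * (t : ℂ))) • H)

theorem Submodule.apply_mem_of_forall_exp_smul_apply_mem {E : Type*} [NormedAddCommGroup E]
    [NormedSpace ℂ E] [CompleteSpace E] (L : E →L[ℂ] E) {K : Submodule ℂ E}
    (hK : IsClosed (K : Set E)) {x : E}
    (h : ∀ t : ℝ, 0 ≤ t → NormedSpace.exp ((t : ℂ) • L) x ∈ K) : L x ∈ K := by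
  set f : ℝ → E := fun t => NormedSpace.exp ((t : ℂ) • L) x
  have hderiv : HasDerivAt f (L x) 0 := by
    have := ((ContinuousLinearMap.apply ℂ E x).hasFDerivAt.comp_hasDerivAt _
      (hasDerivAt_exp_smul_const (𝕂 := ℂ) L ((0 : ℝ) : ℂ))).scomp (0 : ℝ)
        Complex.ofRealCLM.hasDerivAt
    exact this.congr_deriv (by simp)
  have hslope := hasDerivWithinAt_iff_tendsto_slope.1 (hderiv.hasDerivWithinAt (s := Set.Ioi 0))
  rw [Set.sdiff_singleton_eq_self Set.self_notMem_Ioi] at hslope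
  refine hK.mem_of_tendsto hslope (eventually_nhdsWithin_of_forall fun t ht => ?_)
  rw [slope_def_module]
  exact (K.restrictScalars ℝ).smul_mem _ (K.sub_mem (h t (le_of_lt ht)) (h 0 le_rfl))

theorem LinearMap.exists_forall_mem_eq_smul_of_forall_mem_exists_eq_smul {K V : Type*}
    [Field K] [AddCommGroup V] [Module K V] (f : V →ₗ[K] V) {S : Submodule K V}
    (h : ∀ v ∈ S, ∃ d : K, f v = d • v) :
    ∃ c : K, ∀ v ∈ S, f v = c • v := by
  have hmaps : ∀ v ∈ S, f v ∈ S := fun v hv => by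
    obtain ⟨d, hd⟩ := h v hv
    exact hd ▸ S.smul_mem d hv
  obtain ⟨c, hc⟩ := (f.restrict hmaps).exists_eq_smul_id_of_forall_notLinearIndependent
    fun v hli => by
      obtain ⟨d, hd⟩ := h v v.2
      have := LinearIndependent.pair_iff.1 hli d (-1) (Subtype.ext (by simp [hd]))
      simp at this
  exact ⟨c, fun v hv => congrArg Subtype.val (LinearMap.congr_fun hc ⟨v, hv⟩)⟩

theorem Matrix.vecMulVec_mulVec_eq_smul {α m n : Type*} [CommSemiring α] [Fintype n]
    (u : m → α) (v w : n → α) : vecMulVec u v *ᵥ w = (v ⬝ᵥ w) • u := by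
  simp [vecMulVec_mulVec]

noncomputable def dissipator {n : ℕ} (A ρ : Matrix (Fin n) (Fin n) ℂ) :
    Matrix (Fin n) (Fin n) ℂ :=
  A * ρ * Aᴴ - (1 / 2 : ℂ) • (Aᴴ * A * ρ) - (1 / 2 : ℂ) • (ρ * (Aᴴ * A))

theorem LD_eq_sum_dissipator {M n : ℕ} (J : Fin M → Matrix (Fin n) (Fin n) ℂ)
    (lam : Fin M → ℝ) (ρ : Matrix (Fin n) (Fin n) ℂ) :
    LD J lam ρ = ∑ l, (lam l : ℂ) • dissipator (J l) ρ := rfl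

section PureState

variable {n : ℕ} {ψ : Fin n → ℂ}

theorem dissipator_vecMulVec_mulVec (A : Matrix (Fin n) (Fin n) ℂ) (hψ : star ψ ⬝ᵥ ψ = 1) :
    dissipator A (vecMulVec ψ (star ψ)) *ᵥ ψ
      = (star (A *ᵥ ψ) ⬝ᵥ ψ) • (A *ᵥ ψ) - (1 / 2 : ℂ) • ((Aᴴ * A) *ᵥ ψ)
        - (1 / 2 : ℂ) • ((star (A *ᵥ ψ) ⬝ᵥ (A *ᵥ ψ)) • ψ) := by
  simp only [dissipator, sub_mulVec, smul_mulVec, ← mulVec_mulVec, vecMulVec_mulVec_eq_smul, hψ,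
    one_smul, dotProduct_mulVec, star_mulVec, mulVec_smul]

theorem dotProduct_dissipator_vecMulVec_mulVec (A : Matrix (Fin n) (Fin n) ℂ)
    (hψ : star ψ ⬝ᵥ ψ = 1) :
    star ψ ⬝ᵥ dissipator A (vecMulVec ψ (star ψ)) *ᵥ ψ
      = -(star (A *ᵥ ψ - (star ψ ⬝ᵥ A *ᵥ ψ) • ψ) ⬝ᵥ (A *ᵥ ψ - (star ψ ⬝ᵥ A *ᵥ ψ) • ψ)) := by
  have hAA : star ψ ⬝ᵥ (Aᴴ * A) *ᵥ ψ = star (A *ᵥ ψ) ⬝ᵥ A *ᵥ ψ := by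
    rw [← mulVec_mulVec, dotProduct_mulVec, ← star_mulVec]
  have hswap : star (A *ᵥ ψ) ⬝ᵥ ψ = star (star ψ ⬝ᵥ A *ᵥ ψ) := star_dotProduct _ _
  rw [dissipator_vecMulVec_mulVec A hψ]
  simp only [dotProduct_sub, sub_dotProduct, dotProduct_smul, smul_dotProduct, star_sub,
    star_smul, hAA, hswap, hψ, smul_eq_mul]
  ring

theorem dotProduct_LD_vecMulVec_mulVec {M : ℕ} (J : Fin M → Matrix (Fin n) (Fin n) ℂ)
    (lam : Fin M → ℝ) (hψ : star ψ ⬝ᵥ ψ = 1) :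
    star ψ ⬝ᵥ LD J lam (vecMulVec ψ (star ψ)) *ᵥ ψ
      = -∑ l, (lam l : ℂ) * (star ((J l) *ᵥ ψ - (star ψ ⬝ᵥ (J l) *ᵥ ψ) • ψ)
          ⬝ᵥ ((J l) *ᵥ ψ - (star ψ ⬝ᵥ (J l) *ᵥ ψ) • ψ)) := by
  simp only [LD_eq_sum_dissipator, sum_mulVec, dotProduct_sum, smul_mulVec, dotProduct_smul,
    dotProduct_dissipator_vecMulVec_mulVec _ hψ, smul_eq_mul, mul_neg, Finset.sum_neg_distrib]

open ComplexOrder in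
theorem mulVec_eq_smul_of_LD_vecMulVec_eq_zero {M : ℕ} (J : Fin M → Matrix (Fin n) (Fin n) ℂ)
    {lam : Fin M → ℝ} (hlam : ∀ l, 0 < lam l) (hψ : star ψ ⬝ᵥ ψ = 1)
    (hLD : LD J lam (vecMulVec ψ (star ψ)) = 0) (l : Fin M) :
    J l *ᵥ ψ = (star ψ ⬝ᵥ J l *ᵥ ψ) • ψ := by
  set u : Fin M → Fin n → ℂ := fun l => J l *ᵥ ψ - (star ψ ⬝ᵥ J l *ᵥ ψ) • ψ
  have hsum : ∑ l, (lam l : ℂ) * (star (u l) ⬝ᵥ u l) = 0 := by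
    have h := dotProduct_LD_vecMulVec_mulVec J lam hψ
    rwa [hLD, zero_mulVec, dotProduct_zero, eq_comm, neg_eq_zero] at h
  have hterm := (Finset.sum_eq_zero_iff_of_nonneg fun l _ =>
    mul_nonneg (Complex.zero_le_real.2 (hlam l).le) (dotProduct_star_self_nonneg (u l))).1
      hsum l (Finset.mem_univ l)
  have hu : u l = 0 := dotProduct_star_self_eq_zero.1
    ((mul_eq_zero.1 hterm).resolve_left (Complex.ofReal_ne_zero.2 (hlam l).ne'))
  exact sub_eq_zero.1 hu

theorem LD_vecMulVec_mulVec_of_mulVec_eq_smul {M : ℕ} {J : Fin M → Matrix (Fin n) (Fin n) ℂ}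
    (lam : Fin M → ℝ) {c : Fin M → ℂ} (hψ : star ψ ⬝ᵥ ψ = 1) (hc : ∀ l, J l *ᵥ ψ = c l • ψ) :
    LD J lam (vecMulVec ψ (star ψ)) *ᵥ ψ
      = (1 / 2 : ℂ) • ((∑ l, ((lam l * Complex.normSq (c l) : ℝ) : ℂ)) • ψ - Gam J lam *ᵥ ψ) := by
  rw [LD_eq_sum_dissipator, Gam, sum_mulVec, sum_mulVec, Finset.sum_smul,
    ← Finset.sum_sub_distrib, Finset.smul_sum]
  refine Finset.sum_congr rfl fun l _ => ?_
  rw [smul_mulVec, smul_mulVec, dissipator_vecMulVec_mulVec _ hψ, hc l]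
  simp only [star_smul, smul_dotProduct, dotProduct_smul, hψ, Complex.ofReal_mul,
    Complex.normSq_eq_conj_mul_self, Complex.star_def, smul_eq_mul]
  module

end PureState

open ComplexOrder in
theorem exists_smul_dotProduct_star_self_eq_one {n : ℕ} {ψ : Fin n → ℂ} (hψ : ψ ≠ 0) :
    ∃ r : ℂ, r ≠ 0 ∧ star (r • ψ) ⬝ᵥ (r • ψ) = 1 := by
  obtain ⟨s, hs, hss⟩ := RCLike.pos_iff_exists_ofReal.1 (dotProduct_star_self_pos_iff.2 hψ)
  replace hss : (s : ℂ) = star ψ ⬝ᵥ ψ := hss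
  refine ⟨((√s)⁻¹ : ℝ), by simpa using Real.sqrt_ne_zero'.2 hs, ?_⟩
  rw [star_smul, smul_dotProduct, dotProduct_smul, ← hss, Complex.star_def, Complex.conj_ofReal,
    smul_eq_mul, smul_eq_mul]
  have h : (√s)⁻¹ * ((√s)⁻¹ * s) = 1 := by
    field_simp
    exact (Real.sq_sqrt hs.le).symm
  exact_mod_cast h

theorem Submodule.forall_mem_of_forall_dotProduct_star_self_eq_one {n : ℕ}
    (S : Submodule ℂ (Fin n → ℂ)) {P : (Fin n → ℂ) → Prop} (hzero : P 0)
    (hsmul : ∀ (r : ℂ) ψ, r ≠ 0 → P (r • ψ) → P ψ)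
    (hunit : ∀ ψ ∈ S, star ψ ⬝ᵥ ψ = 1 → P ψ) : ∀ ψ ∈ S, P ψ := by
  intro ψ hψS
  rcases eq_or_ne ψ 0 with rfl | hψ
  · exact hzero
  obtain ⟨r, hr, hrψ⟩ := exists_smul_dotProduct_star_self_eq_one hψ
  exact hsmul r ψ hr (hunit _ (S.smul_mem r hψS) hrψ)

theorem mulVec_eq_smul_of_mulVec_smul_eq_smul {n : ℕ} {A : Matrix (Fin n) (Fin n) ℂ}
    {ψ : Fin n → ℂ} {r d : ℂ} (hr : r ≠ 0) (h : A *ᵥ (r • ψ) = d • r • ψ) : A *ᵥ ψ = d • ψ :=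
  smul_right_injective _ hr (by rwa [mulVec_smul, smul_comm d r] at h)

theorem expL_zero {M n : ℕ} (H : Matrix (Fin n) (Fin n) ℂ)
    (J : Fin M → Matrix (Fin n) (Fin n) ℂ) (lam : Fin M → ℝ) : expL H J lam 0 = 1 := by
  -- `expL` fixes an `IsTopologicalRing` instance that instance search does not find for matrices
  -- with the local norm; stating the fact for a general `E` lets unification supply it.
  have h {E : Type} [NormedAddCommGroup E] [NormedSpace ℂ E] [CompleteSpace E] (L : E →L[ℂ] E) :
      NormedSpace.exp (((0 : ℝ) : ℂ) • L) = 1 := by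
    simp
  exact h _

theorem mulVec_mem_of_forall_expL_vecMulVec_mulVec_mem {M n : ℕ} (H : Matrix (Fin n) (Fin n) ℂ)
    (J : Fin M → Matrix (Fin n) (Fin n) ℂ) (lam : Fin M → ℝ) {S : Submodule ℂ (Fin n → ℂ)}
    {ψ : Fin n → ℂ} (hψS : ψ ∈ S) (hψ : star ψ ⬝ᵥ ψ = 1)
    (hLD : LD J lam (vecMulVec ψ (star ψ)) = 0)
    (hevol : ∀ t : ℝ, 0 ≤ t → expL H J lam t (vecMulVec ψ (star ψ)) *ᵥ ψ ∈ S) :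
    H *ᵥ ψ ∈ S := by
  set K := S.comap ((mulVecBilin ℂ ℂ).flip ψ)
  have hLiou : Liou H J lam (vecMulVec ψ (star ψ)) ∈ K :=
    Submodule.apply_mem_of_forall_exp_smul_apply_mem _ (Submodule.closed_of_finiteDimensional K)
      hevol
  have hcomm : -Complex.I • (H *ᵥ ψ - (star ψ ⬝ᵥ H *ᵥ ψ) • ψ) ∈ S := by
    simpa [K, Liou_apply, hLD, sub_mulVec, ← mulVec_mulVec, vecMulVec_mulVec_eq_smul, hψ]
      using hLiou
  have := S.add_mem ((S.smul_mem_iff (by simp)).1 hcomm) (S.smul_mem (star ψ ⬝ᵥ H *ᵥ ψ) hψS)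
  rwa [sub_add_cancel] at this

theorem stmt8_general {M n : ℕ} (H : Matrix (Fin n) (Fin n) ℂ)
    (J : Fin M → Matrix (Fin n) (Fin n) ℂ) (lam : Fin M → ℝ) (hlam : ∀ l, 0 < lam l)
    (S : Submodule ℂ (Fin n → ℂ))
    (hDF : ∀ ψ₀ ∈ S, star ψ₀ ⬝ᵥ ψ₀ = 1 → ∀ t : ℝ, 0 ≤ t →
      LD J lam (expL H J lam t (vecMulVec ψ₀ (star ψ₀))) = 0
      ∧ ∃ φ ∈ S, star φ ⬝ᵥ φ = 1
          ∧ expL H J lam t (vecMulVec ψ₀ (star ψ₀)) = vecMulVec φ (star φ)) :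
    (∀ ψ ∈ S, H.mulVec ψ ∈ S)
    ∧ ∃ c : Fin M → ℂ,
        (∀ ψ ∈ S, ∀ l, (J l).mulVec ψ = c l • ψ)
        ∧ ∀ ψ ∈ S, (Gam J lam).mulVec ψ
            = (∑ l, ((lam l * Complex.normSq (c l) : ℝ) : ℂ)) • ψ := by
  have hLD : ∀ ψ ∈ S, star ψ ⬝ᵥ ψ = 1 → LD J lam (vecMulVec ψ (star ψ)) = 0 :=
    fun ψ hψS hψ => by simpa [expL_zero] using (hDF ψ hψS hψ 0 le_rfl).1
  have hH : ∀ ψ ∈ S, H *ᵥ ψ ∈ S := by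
    refine S.forall_mem_of_forall_dotProduct_star_self_eq_one (by simp)
      (fun r ψ hr h => by rwa [mulVec_smul, S.smul_mem_iff hr] at h) fun ψ hψS hψ => ?_
    refine mulVec_mem_of_forall_expL_vecMulVec_mulVec_mem H J lam hψS hψ (hLD ψ hψS hψ)
      fun t ht => ?_
    obtain ⟨φ, hφS, -, hφ⟩ := (hDF ψ hψS hψ t ht).2
    rw [hφ, vecMulVec_mulVec_eq_smul]
    exact S.smul_mem _ hφS
  have heig : ∀ l, ∀ ψ ∈ S, ∃ d : ℂ, J l *ᵥ ψ = d • ψ := fun l =>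
    S.forall_mem_of_forall_dotProduct_star_self_eq_one ⟨0, by simp⟩
      (fun r ψ hr ⟨d, hd⟩ => ⟨d, mulVec_eq_smul_of_mulVec_smul_eq_smul hr hd⟩) fun ψ hψS hψ =>
        ⟨_, mulVec_eq_smul_of_LD_vecMulVec_eq_zero J hlam hψ (hLD ψ hψS hψ) l⟩
  choose c hc using fun l =>
    (J l).mulVecLin.exists_forall_mem_eq_smul_of_forall_mem_exists_eq_smul (heig l)
  refine ⟨hH, c, fun ψ hψS l => hc l ψ hψS,
    S.forall_mem_of_forall_dotProduct_star_self_eq_one (by simp)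
      (fun r ψ hr h => mulVec_eq_smul_of_mulVec_smul_eq_smul hr h) fun ψ hψS hψ => ?_⟩
  have hLDψ := LD_vecMulVec_mulVec_of_mulVec_eq_smul lam hψ fun l => hc l ψ hψS
  rw [hLD ψ hψS hψ, zero_mulVec, eq_comm, smul_eq_zero, sub_eq_zero] at hLDψ
  exact (hLDψ.resolve_left (by norm_num)).symm

/-- Theorem (dynamically stable restricted DFS, necessity): if every pure state initialized
in the nonzero subspace `S` remains, for all `t ≥ 0`, a pure state supported in `S` that is
annihilated by `L_D`, then (i) `H` maps `S` into `S`, and there are common eigenvalues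
`c_l` and `g = Σ_l λ_l |c_l|²` such that (ii) `J_l ψ = c_l ψ` and (iii) `Γ ψ = g ψ` for
every `ψ ∈ S`. -/
theorem stmt8 {M n : ℕ} (H : Matrix (Fin n) (Fin n) ℂ) (hH : H.IsHermitian)
    (J : Fin M → Matrix (Fin n) (Fin n) ℂ) (lam : Fin M → ℝ) (hlam : ∀ l, 0 < lam l)
    (S : Submodule ℂ (Fin n → ℂ)) (hS : S ≠ ⊥)
    (hDF : ∀ ψ₀ ∈ S, star ψ₀ ⬝ᵥ ψ₀ = 1 → ∀ t : ℝ, 0 ≤ t →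
      LD J lam (expL H J lam t (vecMulVec ψ₀ (star ψ₀))) = 0
      ∧ ∃ φ ∈ S, star φ ⬝ᵥ φ = 1
          ∧ expL H J lam t (vecMulVec ψ₀ (star ψ₀)) = vecMulVec φ (star φ)) :
    (∀ ψ ∈ S, H.mulVec ψ ∈ S)
    ∧ ∃ c : Fin M → ℂ,
        (∀ ψ ∈ S, ∀ l, (J l).mulVec ψ = c l • ψ)
        ∧ ∀ ψ ∈ S, (Gam J lam).mulVec ψ
            = (∑ l, ((lam l * Complex.normSq (c l) : ℝ) : ℂ)) • ψ :=
  stmt8_general H J lam hlam S hDF
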